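/- arXiv:2408.04357 — 2 statements merged into one kernel-verified Lean document; each statement's English description precedes it below -/
import Mathlib

section
/- Let K_1,...,K_n be entrywise nonnegative N×N matrices and α ∈ [0,1]. Then r(S_α(K_1) ··· S_α(K_n)) ≤ r(K_1 ··· K_n)^α · r(K_n ··· K_1)^{1−α}, where r is the spectral radius and S_α(K)_{ij} = k_{ij}^α k_{ji}^{1−α}. -/
/-- The spectral radius of a real matrix (largest modulus of a complex eigenvalue). -/
noncomputable def specRad {N : ℕ} (A : Matrix (Fin N) (Fin N) ℝ) : ℝ :=
  (spectralRadius ℂ (A.map (Complex.ofReal))).toReal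

/-- The weighted geometric symmetrization `S_α(K)` with entries `k_{ij}^α k_{ji}^{1-α}`. -/
noncomputable def wgs {N : ℕ} (α : ℝ) (K : Matrix (Fin N) (Fin N) ℝ) :
    Matrix (Fin N) (Fin N) ℝ :=
  Matrix.of fun i j => K i j ^ α * K j i ^ (1 - α)

/-!
`S_α(K)` is dominated entrywise by the weighted geometric mean of `K` and `Kᵀ`, and by Hölder's
inequality such a domination survives matrix multiplication. Hence `(S_α(K₁) ⋯ S_α(Kₙ))^m` is
dominated by the geometric mean of `(K₁ ⋯ Kₙ)^m` and `((Kₙ ⋯ K₁)ᵀ)^m`, and Hölder once more, on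
row sums, bounds its `ℓ^∞` operator norm by `‖(K₁ ⋯ Kₙ)^m‖^α ‖((Kₙ ⋯ K₁)ᵀ)^m‖^(1-α)`. Gelfand's
formula turns this into the bound on spectral radii; transposition does not change the spectrum.
-/

open scoped ENNReal NNReal
open Matrix

theorem Real.sum_rpow_mul_rpow_one_sub_le_of_nonneg {ι : Type*} (s : Finset ι) {α : ℝ}
    (hα0 : 0 ≤ α) (hα1 : α ≤ 1) {f g : ι → ℝ} (hf : ∀ i ∈ s, 0 ≤ f i) (hg : ∀ i ∈ s, 0 ≤ g i) :
    ∑ i ∈ s, f i ^ α * g i ^ (1 - α) ≤ (∑ i ∈ s, f i) ^ α * (∑ i ∈ s, g i) ^ (1 - α) := by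
  rcases hα0.eq_or_lt with rfl | hα0
  · simp
  rcases hα1.eq_or_lt with rfl | hα1
  · simp
  have hpq : (1 / α).HolderConjugate (1 / (1 - α)) :=
    (Real.holderConjugate_iff).2 ⟨by rw [lt_div_iff₀ hα0]; linarith, by simp⟩
  have cancel : ∀ {x r : ℝ}, 0 ≤ x → 0 < r → (x ^ r) ^ (1 / r) = x := fun hx hr => by
    rw [← Real.rpow_mul hx, mul_one_div_cancel hr.ne', Real.rpow_one]
  simpa only [one_div_one_div, Finset.sum_congr rfl fun i hi => cancel (hf i hi) hα0,
    Finset.sum_congr rfl fun i hi => cancel (hg i hi) (sub_pos.2 hα1)] using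
    Real.inner_le_Lp_mul_Lq_of_nonneg s hpq (fun i hi => Real.rpow_nonneg (hf i hi) α)
      (fun i hi => Real.rpow_nonneg (hg i hi) (1 - α))

theorem NNReal.sum_rpow_mul_rpow_one_sub_le {ι : Type*} (s : Finset ι) {α : ℝ}
    (hα0 : 0 ≤ α) (hα1 : α ≤ 1) (f g : ι → ℝ≥0) :
    ∑ i ∈ s, f i ^ α * g i ^ (1 - α) ≤ (∑ i ∈ s, f i) ^ α * (∑ i ∈ s, g i) ^ (1 - α) := by
  rw [← NNReal.coe_le_coe]
  push_cast
  exact Real.sum_rpow_mul_rpow_one_sub_le_of_nonneg s hα0 hα1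
    (fun i _ => (f i).2) (fun i _ => (g i).2)

namespace spectrum

variable {A : Type*} [NormedRing A] [NormedAlgebra ℂ A] [CompleteSpace A]

theorem spectralRadius_ne_top (a : A) : spectralRadius ℂ a ≠ ∞ :=
  ne_top_of_le_ne_top (by finiteness) (spectralRadius_le_pow_nnnorm_pow_one_div ℂ a 0)

theorem spectralRadius_le_rpow_mul_rpow_of_nnnorm_pow_le {a b c : A} {p q : ℝ} (hp : 0 ≤ p)
    (hq : 0 ≤ q) (h : ∀ m : ℕ, ‖a ^ m‖₊ ≤ ‖b ^ m‖₊ ^ p * ‖c ^ m‖₊ ^ q) :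
    spectralRadius ℂ a ≤ spectralRadius ℂ b ^ p * spectralRadius ℂ c ^ q := by
  have hb := (gelfand_formula b).ennrpow_const p
  have hc := (gelfand_formula c).ennrpow_const q
  refine le_of_tendsto_of_tendsto' (gelfand_formula a)
    (ENNReal.Tendsto.mul hb (.inr (ENNReal.rpow_ne_top_of_nonneg hq (spectralRadius_ne_top c))) hc
      (.inr (ENNReal.rpow_ne_top_of_nonneg hp (spectralRadius_ne_top b)))) fun m => ?_
  have hm : (0 : ℝ) ≤ 1 / m := by positivity
  calc (‖a ^ m‖₊ : ℝ≥0∞) ^ (1 / m : ℝ)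
      ≤ ((‖b ^ m‖₊ ^ p * ‖c ^ m‖₊ ^ q : ℝ≥0) : ℝ≥0∞) ^ (1 / m : ℝ) := by
        gcongr
        exact_mod_cast h m
    _ = _ := by
        rw [ENNReal.coe_mul, ENNReal.coe_rpow_of_nonneg _ hp, ENNReal.coe_rpow_of_nonneg _ hq,
          ENNReal.mul_rpow_of_nonneg _ _ hm, ← ENNReal.rpow_mul, ← ENNReal.rpow_mul,
          ← ENNReal.rpow_mul, ← ENNReal.rpow_mul, mul_comm p, mul_comm q]

theorem toReal_spectralRadius_le_rpow_mul_rpow_of_nnnorm_pow_le {a b c : A} {p q : ℝ}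
    (hp : 0 ≤ p) (hq : 0 ≤ q) (h : ∀ m : ℕ, ‖a ^ m‖₊ ≤ ‖b ^ m‖₊ ^ p * ‖c ^ m‖₊ ^ q) :
    (spectralRadius ℂ a).toReal ≤
      (spectralRadius ℂ b).toReal ^ p * (spectralRadius ℂ c).toReal ^ q := by
  rw [ENNReal.toReal_rpow, ENNReal.toReal_rpow, ← ENNReal.toReal_mul]
  exact ENNReal.toReal_mono (ENNReal.mul_ne_top
    (ENNReal.rpow_ne_top_of_nonneg hp (spectralRadius_ne_top b))
    (ENNReal.rpow_ne_top_of_nonneg hq (spectralRadius_ne_top c)))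
    (spectralRadius_le_rpow_mul_rpow_of_nnnorm_pow_le hp hq h)

end spectrum

namespace Matrix

variable {ι : Type*}

structure IsGeomMeanDominated (α : ℝ) (X A C : Matrix ι ι ℝ) : Prop where
  nonneg_left : ∀ i j, 0 ≤ A i j
  nonneg_right : ∀ i j, 0 ≤ C i j
  abs_le : ∀ i j, |X i j| ≤ A i j ^ α * C i j ^ (1 - α)

namespace IsGeomMeanDominated

variable {α : ℝ} {X Y A B C D : Matrix ι ι ℝ}

theorem one [DecidableEq ι] : IsGeomMeanDominated α (1 : Matrix ι ι ℝ) 1 1 := by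
  have h01 : ∀ i j, (0 : ℝ) ≤ (1 : Matrix ι ι ℝ) i j := fun i j => by
    rw [one_apply]; split_ifs <;> norm_num
  refine ⟨h01, h01, fun i j => ?_⟩
  rcases eq_or_ne i j with rfl | hij
  · simp
  · simp only [one_apply_ne hij, abs_zero]
    positivity

variable [Fintype ι]

theorem mul (hα0 : 0 ≤ α) (hα1 : α ≤ 1) (hX : IsGeomMeanDominated α X A C)
    (hY : IsGeomMeanDominated α Y B D) :
    IsGeomMeanDominated α (X * Y) (A * B) (C * D) := by
  have hA := hX.nonneg_left
  have hB := hY.nonneg_left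
  have hC := hX.nonneg_right
  have hD := hY.nonneg_right
  refine ⟨fun i j => Finset.sum_nonneg fun k _ => mul_nonneg (hA i k) (hB k j),
    fun i j => Finset.sum_nonneg fun k _ => mul_nonneg (hC i k) (hD k j), fun i j => ?_⟩
  calc |(X * Y) i j| ≤ ∑ k, |X i k| * |Y k j| := by
        simpa only [mul_apply, abs_mul] using Finset.abs_sum_le_sum_abs (fun k => X i k * Y k j) _
    _ ≤ ∑ k, (A i k ^ α * C i k ^ (1 - α)) * (B k j ^ α * D k j ^ (1 - α)) :=
        Finset.sum_le_sum fun k _ => mul_le_mul (hX.abs_le i k) (hY.abs_le k j) (abs_nonneg _)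
          ((abs_nonneg _).trans (hX.abs_le i k))
    _ = ∑ k, (A i k * B k j) ^ α * (C i k * D k j) ^ (1 - α) := by
        refine Finset.sum_congr rfl fun k _ => ?_
        rw [Real.mul_rpow (hA i k) (hB k j), Real.mul_rpow (hC i k) (hD k j)]
        ring
    _ ≤ (A * B) i j ^ α * (C * D) i j ^ (1 - α) :=
        Real.sum_rpow_mul_rpow_one_sub_le_of_nonneg _ hα0 hα1
          (fun k _ => mul_nonneg (hA i k) (hB k j)) (fun k _ => mul_nonneg (hC i k) (hD k j))

theorem pow [DecidableEq ι] (hα0 : 0 ≤ α) (hα1 : α ≤ 1) (hX : IsGeomMeanDominated α X A C)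
    (m : ℕ) : IsGeomMeanDominated α (X ^ m) (A ^ m) (C ^ m) := by
  induction m with
  | zero => simpa only [pow_zero] using one
  | succ m ih => simpa only [pow_succ] using ih.mul hα0 hα1 hX

attribute [local instance] Matrix.linftyOpNormedAddCommGroup in
theorem nnnorm_le (hα0 : 0 ≤ α) (hα1 : α ≤ 1)
    (hX : IsGeomMeanDominated α X A C) : ‖X‖₊ ≤ ‖A‖₊ ^ α * ‖C‖₊ ^ (1 - α) := by
  have row_le : ∀ (M : Matrix ι ι ℝ) i, ∑ j, ‖M i j‖₊ ≤ ‖M‖₊ := fun M i => by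
    rw [linfty_opNNNorm_def]
    exact Finset.le_sup (f := fun i => ∑ j, ‖M i j‖₊) (Finset.mem_univ i)
  rw [linfty_opNNNorm_def X]
  refine Finset.sup_le fun i _ => ?_
  calc ∑ j, ‖X i j‖₊ ≤ ∑ j, ‖A i j‖₊ ^ α * ‖C i j‖₊ ^ (1 - α) := by
        refine Finset.sum_le_sum fun j _ => ?_
        rw [← NNReal.coe_le_coe]
        push_cast
        simpa only [Real.norm_eq_abs, abs_of_nonneg (hX.nonneg_left i j),
          abs_of_nonneg (hX.nonneg_right i j)] using hX.abs_le i j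
    _ ≤ (∑ j, ‖A i j‖₊) ^ α * (∑ j, ‖C i j‖₊) ^ (1 - α) :=
        NNReal.sum_rpow_mul_rpow_one_sub_le _ hα0 hα1 _ _
    _ ≤ ‖A‖₊ ^ α * ‖C‖₊ ^ (1 - α) := by
        gcongr
        exacts [row_le A i, row_le C i]

end IsGeomMeanDominated

variable [Fintype ι]

theorem spectrum_transpose {R : Type*} [CommRing R] [DecidableEq ι] (M : Matrix ι ι R) :
    spectrum R Mᵀ = spectrum R M := by
  ext z
  have : algebraMap R (Matrix ι ι R) z - Mᵀ = (algebraMap R (Matrix ι ι R) z - M)ᵀ := by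
    rw [transpose_sub, algebraMap_eq_diagonal, diagonal_transpose]
  simp only [spectrum.mem_iff, this, isUnit_transpose]

theorem spectralRadius_transpose {𝕜 : Type*} [NormedField 𝕜] [DecidableEq ι]
    (M : Matrix ι ι 𝕜) : spectralRadius 𝕜 Mᵀ = spectralRadius 𝕜 M := by
  simp only [spectralRadius, spectrum_transpose]

attribute [local instance] Matrix.linftyOpNormedAddCommGroup in
theorem linfty_opNNNorm_map_ofReal (X : Matrix ι ι ℝ) : ‖X.map ((↑) : ℝ → ℂ)‖₊ = ‖X‖₊ := by
  simp only [linfty_opNNNorm_def, map_apply, Complex.nnnorm_real]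

variable {N : ℕ} {α : ℝ}

theorem isGeomMeanDominated_wgs {K : Matrix (Fin N) (Fin N) ℝ} (hK : ∀ i j, 0 ≤ K i j) :
    IsGeomMeanDominated α (wgs α K) K Kᵀ :=
  ⟨hK, fun i j => hK j i, fun i j =>
    (abs_of_nonneg (mul_nonneg (Real.rpow_nonneg (hK i j) _) (Real.rpow_nonneg (hK j i) _))).le⟩

theorem isGeomMeanDominated_list_prod_wgs (hα0 : 0 ≤ α) (hα1 : α ≤ 1)
    (L : List (Matrix (Fin N) (Fin N) ℝ)) (hL : ∀ K ∈ L, ∀ i j, 0 ≤ K i j) :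
    IsGeomMeanDominated α (L.map (wgs α)).prod L.prod L.reverse.prodᵀ := by
  induction L with
  | nil => simpa using IsGeomMeanDominated.one
  | cons K L ih =>
    simp only [List.forall_mem_cons] at hL
    simpa only [List.map_cons, List.prod_cons, List.reverse_cons, List.prod_append,
      List.prod_nil, mul_one, transpose_mul] using
      (isGeomMeanDominated_wgs hL.1).mul hα0 hα1 (ih hL.2)

end Matrix

attribute [local instance] Matrix.linftyOpNormedRing Matrix.linftyOpNormedAlgebra

/-- `r(S_α(K₁) ⋯ S_α(Kₙ)) ≤ r(K₁ ⋯ Kₙ)^α * r(Kₙ ⋯ K₁)^{1-α}`. -/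
theorem specRad_prod_wgs_le {N n : ℕ} (K : Fin n → Matrix (Fin N) (Fin N) ℝ)
    (hK : ∀ i x y, 0 ≤ K i x y) (α : ℝ) (hα0 : 0 ≤ α) (hα1 : α ≤ 1) :
    specRad (List.ofFn (fun i => wgs α (K i))).prod ≤
      specRad (List.ofFn K).prod ^ α * specRad (List.ofFn K).reverse.prod ^ (1 - α) := by
  set L := List.ofFn K
  rw [show List.ofFn (fun i => wgs α (K i)) = L.map (wgs α) by rw [List.map_ofFn]; rfl]
  have hdom := isGeomMeanDominated_list_prod_wgs hα0 hα1 L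
    (by simpa [L, List.forall_mem_ofFn_iff] using hK)
  have map_ofReal_pow (X : Matrix (Fin N) (Fin N) ℝ) (m : ℕ) :
      X.map ((↑) : ℝ → ℂ) ^ m = (X ^ m).map (↑) :=
    (X.map_pow Complex.ofRealHom m).symm
  unfold specRad
  rw [← spectralRadius_transpose (L.reverse.prod.map _), ← transpose_map]
  exact spectrum.toReal_spectralRadius_le_rpow_mul_rpow_of_nnnorm_pow_le hα0 (sub_nonneg.2 hα1)
    fun m => by
      simpa only [map_ofReal_pow, linfty_opNNNorm_map_ofReal]
        using (hdom.pow hα0 hα1 m).nnnorm_le hα0 hα1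
end

section
/- Let K_1, K_2 be entrywise nonnegative N×N matrices. The function ρ_2(α) = sqrt( r(S_α(K_1) S_α(K_2)) · r(S_α(K_2) S_α(K_1)) ) is decreasing on [0,1/2] and increasing on [1/2,1], where r is the spectral radius and S_α(K)_{ij} = k_{ij}^α k_{ji}^{1−α}. In particular ρ_2(α) ≥ ρ_2(1/2) for all α ∈ [0,1]. -/
/-- `ρ₂(α) = √( r(S_α(K₁) S_α(K₂)) · r(S_α(K₂) S_α(K₁)) )`. -/
noncomputable def rho2 {N : ℕ} (K₁ K₂ : Matrix (Fin N) (Fin N) ℝ) (α : ℝ) : ℝ :=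
  Real.sqrt (specRad (wgs α K₁ * wgs α K₂) * specRad (wgs α K₂ * wgs α K₁))

open Set
open scoped NNReal ENNReal Matrix

theorem Finset.sum_rpow_mul_rpow_one_sub_le {ι : Type*} (s : Finset ι) {x y : ι → ℝ}
    (hx : ∀ i ∈ s, 0 ≤ x i) (hy : ∀ i ∈ s, 0 ≤ y i) {t : ℝ} (ht₀ : 0 ≤ t) (ht₁ : t ≤ 1) :
    ∑ i ∈ s, x i ^ t * y i ^ (1 - t) ≤ (∑ i ∈ s, x i) ^ t * (∑ i ∈ s, y i) ^ (1 - t) := by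
  rcases ht₀.eq_or_lt with rfl | ht₀
  · simp
  rcases ht₁.eq_or_lt with rfl | ht₁
  · simp
  have hpq : Real.HolderConjugate (1 / t) (1 / (1 - t)) :=
    Real.holderConjugate_one_div ht₀ (by linarith) (by ring)
  have hroot : ∀ {u : ℝ}, u ≠ 0 → ∀ {z : ι → ℝ}, (∀ i ∈ s, 0 ≤ z i) →
      ∀ i ∈ s, (z i ^ u) ^ (1 / u) = z i := fun hu _ hz i hi => by
    rw [← Real.rpow_mul (hz i hi), mul_one_div_cancel hu, Real.rpow_one]
  have := Real.inner_le_Lp_mul_Lq_of_nonneg s hpq (fun i hi => Real.rpow_nonneg (hx i hi) t)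
    (fun i hi => Real.rpow_nonneg (hy i hi) (1 - t))
  rwa [Finset.sum_congr rfl (hroot ht₀.ne' hx), Finset.sum_congr rfl (hroot (by linarith) hy),
    one_div_one_div, one_div_one_div] at this

theorem Real.rpow_mul_rpow_one_sub_le_max {x y t : ℝ} (hx : 0 ≤ x) (hy : 0 ≤ y)
    (ht₀ : 0 ≤ t) (ht₁ : t ≤ 1) : x ^ t * y ^ (1 - t) ≤ max x y :=
  calc x ^ t * y ^ (1 - t) ≤ t * x + (1 - t) * y :=
        Real.geom_mean_le_arith_mean2_weighted ht₀ (by linarith) hx hy (by ring)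
    _ ≤ t * max x y + (1 - t) * max x y := by
        gcongr
        exacts [le_max_left x y, le_max_right x y]
    _ = max x y := by ring

/-- Log-convexity in the extended sense that allows `f` to vanish (`log 0 = -∞`). -/
structure LogConvexOn {E : Type*} [AddCommMonoid E] [Module ℝ E] (s : Set E) (f : E → ℝ) :
    Prop where
  convex : Convex ℝ s
  nonneg : ∀ x ∈ s, 0 ≤ f x
  le_rpow_mul_rpow : ∀ ⦃x⦄, x ∈ s → ∀ ⦃y⦄, y ∈ s → ∀ ⦃a b : ℝ⦄, 0 ≤ a → 0 ≤ b → a + b = 1 →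
    f (a • x + b • y) ≤ f x ^ a * f y ^ b

namespace LogConvexOn

variable {E : Type*} [AddCommMonoid E] [Module ℝ E] {s : Set E} {f g : E → ℝ}

theorem mul (hf : LogConvexOn s f) (hg : LogConvexOn s g) : LogConvexOn s (f * g) := by
  refine ⟨hf.convex, fun x hx => mul_nonneg (hf.nonneg x hx) (hg.nonneg x hx),
    fun x hx y hy a b ha hb hab => ?_⟩
  calc f (a • x + b • y) * g (a • x + b • y)
      ≤ (f x ^ a * f y ^ b) * (g x ^ a * g y ^ b) :=
        mul_le_mul (hf.le_rpow_mul_rpow hx hy ha hb hab) (hg.le_rpow_mul_rpow hx hy ha hb hab)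
          (hg.nonneg _ (hf.convex hx hy ha hb hab))
          (mul_nonneg (Real.rpow_nonneg (hf.nonneg x hx) a) (Real.rpow_nonneg (hf.nonneg y hy) b))
    _ = (f x * g x) ^ a * (f y * g y) ^ b := by
        rw [Real.mul_rpow (hf.nonneg x hx) (hg.nonneg x hx),
          Real.mul_rpow (hf.nonneg y hy) (hg.nonneg y hy)]
        ring

theorem quasiconvexOn (hf : LogConvexOn s f) : QuasiconvexOn ℝ s f := by
  refine quasiconvexOn_iff_le_max.2 ⟨hf.convex, fun x hx y hy a b ha hb hab => ?_⟩
  obtain rfl : b = 1 - a := by linarith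
  exact (hf.le_rpow_mul_rpow hx hy ha hb hab).trans
    (Real.rpow_mul_rpow_one_sub_le_max (hf.nonneg x hx) (hf.nonneg y hy) ha (by linarith))

end LogConvexOn

section SymmetricQuasiconvex

variable {β : Type*} [LinearOrder β] {f : ℝ → β}

theorem QuasiconvexOn.antitoneOn_Icc_zero_half (hf : QuasiconvexOn ℝ (Icc 0 1) f)
    (hsymm : ∀ x, f (1 - x) = f x) : AntitoneOn f (Icc 0 (1 / 2)) := by
  rintro a ⟨ha₀, -⟩ b ⟨-, hb⟩ hab
  have ha : a ∈ {x ∈ Icc (0 : ℝ) 1 | f x ≤ f a} := ⟨⟨ha₀, by linarith⟩, le_rfl⟩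
  have ha' : 1 - a ∈ {x ∈ Icc (0 : ℝ) 1 | f x ≤ f a} := ⟨⟨by linarith, by linarith⟩, (hsymm a).le⟩
  exact ((hf (f a)).ordConnected.out ha ha' ⟨hab, by linarith⟩).2

theorem QuasiconvexOn.monotoneOn_Icc_half_one (hf : QuasiconvexOn ℝ (Icc 0 1) f)
    (hsymm : ∀ x, f (1 - x) = f x) : MonotoneOn f (Icc (1 / 2) 1) := by
  rintro a ⟨ha, -⟩ b ⟨-, hb₁⟩ hab
  have hb : b ∈ {x ∈ Icc (0 : ℝ) 1 | f x ≤ f b} := ⟨⟨by linarith, hb₁⟩, le_rfl⟩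
  have hb' : 1 - b ∈ {x ∈ Icc (0 : ℝ) 1 | f x ≤ f b} := ⟨⟨by linarith, by linarith⟩, (hsymm b).le⟩
  exact ((hf (f b)).ordConnected.out hb' hb ⟨by linarith, hab⟩).2

end SymmetricQuasiconvex

/- Gelfand's formula holds for any Banach algebra norm; the `ℓ^∞` operator norm is the one that
is computed from row sums. -/
attribute [local instance] Matrix.linftyOpNormedAddCommGroup Matrix.linftyOpNormedRing
  Matrix.linftyOpNormedAlgebra

namespace Matrix

variable {l m n : Type*}

theorem mul_apply_nonneg [Fintype m] {A : Matrix l m ℝ} {B : Matrix m n ℝ}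
    (hA : ∀ i j, 0 ≤ A i j) (hB : ∀ i j, 0 ≤ B i j) (i : l) (j : n) : 0 ≤ (A * B) i j :=
  Finset.sum_nonneg fun k _ => mul_nonneg (hA i k) (hB k j)

variable {t : ℝ}

theorem mul_apply_le_rpow_mul_rpow [Fintype m] (ht₀ : 0 ≤ t) (ht₁ : t ≤ 1)
    {A₁ B₁ C₁ : Matrix l m ℝ} {A₂ B₂ C₂ : Matrix m n ℝ}
    (hA₁ : ∀ i j, 0 ≤ A₁ i j) (hA₂ : ∀ i j, 0 ≤ A₂ i j)
    (hB₁ : ∀ i j, 0 ≤ B₁ i j) (hB₂ : ∀ i j, 0 ≤ B₂ i j) (hC₂ : ∀ i j, 0 ≤ C₂ i j)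
    (h₁ : ∀ i j, C₁ i j ≤ A₁ i j ^ t * B₁ i j ^ (1 - t))
    (h₂ : ∀ i j, C₂ i j ≤ A₂ i j ^ t * B₂ i j ^ (1 - t)) (i : l) (j : n) :
    (C₁ * C₂) i j ≤ (A₁ * A₂) i j ^ t * (B₁ * B₂) i j ^ (1 - t) := by
  have hterm : ∀ k, C₁ i k * C₂ k j ≤ (A₁ i k * A₂ k j) ^ t * (B₁ i k * B₂ k j) ^ (1 - t) := by
    intro k
    calc C₁ i k * C₂ k j
        ≤ (A₁ i k ^ t * B₁ i k ^ (1 - t)) * (A₂ k j ^ t * B₂ k j ^ (1 - t)) :=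
          mul_le_mul (h₁ i k) (h₂ k j) (hC₂ k j) (by have := hA₁ i k; have := hB₁ i k; positivity)
      _ = (A₁ i k * A₂ k j) ^ t * (B₁ i k * B₂ k j) ^ (1 - t) := by
          rw [Real.mul_rpow (hA₁ i k) (hA₂ k j), Real.mul_rpow (hB₁ i k) (hB₂ k j)]
          ring
  simp only [mul_apply]
  exact (Finset.sum_le_sum fun k _ => hterm k).trans <|
    Finset.sum_rpow_mul_rpow_one_sub_le _ (fun k _ => mul_nonneg (hA₁ i k) (hA₂ k j))
      (fun k _ => mul_nonneg (hB₁ i k) (hB₂ k j)) ht₀ ht₁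

theorem pow_apply_le_rpow_mul_rpow [Fintype n] [DecidableEq n] (ht₀ : 0 ≤ t) (ht₁ : t ≤ 1)
    {A B C : Matrix n n ℝ} (hA : ∀ i j, 0 ≤ A i j) (hB : ∀ i j, 0 ≤ B i j)
    (hC₀ : ∀ i j, 0 ≤ C i j) (hC : ∀ i j, C i j ≤ A i j ^ t * B i j ^ (1 - t)) (k : ℕ)
    (i j : n) : (C ^ k) i j ≤ (A ^ k) i j ^ t * (B ^ k) i j ^ (1 - t) := by
  induction k generalizing i j with
  | zero =>
    rw [pow_zero, pow_zero, pow_zero, one_apply]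
    split_ifs
    · simp
    · positivity
  | succ k ih =>
    rw [pow_succ, pow_succ, pow_succ]
    exact mul_apply_le_rpow_mul_rpow ht₀ ht₁ (pow_apply_nonneg hA k) hA (pow_apply_nonneg hB k) hB
      hC₀ ih hC i j

theorem sum_norm_apply_le_linfty_opNorm [Fintype m] [Fintype n] {α : Type*} [NormedAddCommGroup α]
    (M : Matrix m n α) (i : m) : ∑ j, ‖M i j‖ ≤ ‖M‖ := by
  have := NNReal.coe_le_coe.2 (Finset.le_sup (f := fun i => ∑ j, ‖M i j‖₊) (Finset.mem_univ i))
  rwa [← linfty_opNorm_def, NNReal.coe_sum] at this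

theorem linfty_opNorm_le_of_sum_norm_le [Fintype m] [Fintype n] {α : Type*}
    [NormedAddCommGroup α] {M : Matrix m n α} {c : ℝ} (hc : 0 ≤ c) (h : ∀ i, ∑ j, ‖M i j‖ ≤ c) :
    ‖M‖ ≤ c := by
  lift c to ℝ≥0 using hc
  rw [linfty_opNorm_def, NNReal.coe_le_coe]
  exact Finset.sup_le fun i _ => by rw [← NNReal.coe_le_coe]; push_cast; exact h i

theorem linfty_opNorm_le_rpow_mul_rpow [Fintype m] [Fintype n] (ht₀ : 0 ≤ t) (ht₁ : t ≤ 1)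
    {A B C : Matrix m n ℝ} (hA : ∀ i j, 0 ≤ A i j) (hB : ∀ i j, 0 ≤ B i j)
    (hC : ∀ i j, ‖C i j‖ ≤ A i j ^ t * B i j ^ (1 - t)) :
    ‖C‖ ≤ ‖A‖ ^ t * ‖B‖ ^ (1 - t) := by
  have hrow : ∀ M : Matrix m n ℝ, (∀ i j, 0 ≤ M i j) → ∀ i, ∑ j, M i j ≤ ‖M‖ := fun M hM i => by
    simpa only [Real.norm_of_nonneg (hM i _)] using sum_norm_apply_le_linfty_opNorm M i
  refine linfty_opNorm_le_of_sum_norm_le (by positivity) fun i => ?_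
  calc ∑ j, ‖C i j‖ ≤ ∑ j, A i j ^ t * B i j ^ (1 - t) := Finset.sum_le_sum fun j _ => hC i j
    _ ≤ (∑ j, A i j) ^ t * (∑ j, B i j) ^ (1 - t) :=
        Finset.sum_rpow_mul_rpow_one_sub_le _ (fun j _ => hA i j) (fun j _ => hB i j) ht₀ ht₁
    _ ≤ ‖A‖ ^ t * ‖B‖ ^ (1 - t) := by
        have hA₀ := Finset.sum_nonneg fun j (_ : j ∈ Finset.univ) => hA i j
        have hB₀ := Finset.sum_nonneg fun j (_ : j ∈ Finset.univ) => hB i j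
        exact mul_le_mul (Real.rpow_le_rpow hA₀ (hrow A hA i) ht₀)
          (Real.rpow_le_rpow hB₀ (hrow B hB i) (by linarith)) (by positivity) (by positivity)

theorem linfty_opNorm_map_ofReal [Fintype m] [Fintype n] (M : Matrix m n ℝ) :
    ‖M.map Complex.ofReal‖ = ‖M‖ := by
  simp only [linfty_opNorm_def, map_apply, Complex.nnnorm_real]

end Matrix

theorem spectrum.spectralRadius_ne_top_s14 {A : Type*} [NormedRing A] [NormedAlgebra ℂ A]
    [CompleteSpace A] (a : A) : spectralRadius ℂ a ≠ ∞ :=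
  ne_top_of_le_ne_top (by finiteness) (spectralRadius_le_pow_nnnorm_pow_one_div ℂ a 0)

theorem spectrum.spectralRadius_le_rpow_mul_rpow_of_norm_pow_le {A : Type*} [NormedRing A]
    [NormedAlgebra ℂ A] [CompleteSpace A] {a b c : A} {t : ℝ} (ht₀ : 0 ≤ t) (ht₁ : t ≤ 1)
    (h : ∀ n : ℕ, ‖c ^ n‖ ≤ ‖a ^ n‖ ^ t * ‖b ^ n‖ ^ (1 - t)) :
    spectralRadius ℂ c ≤ spectralRadius ℂ a ^ t * spectralRadius ℂ b ^ (1 - t) := by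
  have hroot : ∀ n : ℕ, (‖c ^ n‖₊ : ℝ≥0∞) ^ (1 / n : ℝ) ≤
      ((‖a ^ n‖₊ : ℝ≥0∞) ^ (1 / n : ℝ)) ^ t * ((‖b ^ n‖₊ : ℝ≥0∞) ^ (1 / n : ℝ)) ^ (1 - t) := by
    intro n
    have hn : (‖c ^ n‖₊ : ℝ≥0∞) ≤ (‖a ^ n‖₊ : ℝ≥0∞) ^ t * (‖b ^ n‖₊ : ℝ≥0∞) ^ (1 - t) := by
      rw [← ENNReal.coe_rpow_of_nonneg _ ht₀, ← ENNReal.coe_rpow_of_nonneg _ (by linarith),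
        ← ENNReal.coe_mul, ENNReal.coe_le_coe, ← NNReal.coe_le_coe]
      push_cast
      exact h n
    calc (‖c ^ n‖₊ : ℝ≥0∞) ^ (1 / n : ℝ)
        ≤ ((‖a ^ n‖₊ : ℝ≥0∞) ^ t * (‖b ^ n‖₊ : ℝ≥0∞) ^ (1 - t)) ^ (1 / n : ℝ) := by gcongr
      _ = _ := by
        rw [ENNReal.mul_rpow_of_nonneg _ _ (by positivity), ← ENNReal.rpow_mul,
          ← ENNReal.rpow_mul, ← ENNReal.rpow_mul, ← ENNReal.rpow_mul, mul_comm t,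
          mul_comm (1 - t)]
  refine le_of_tendsto_of_tendsto' (pow_nnnorm_pow_one_div_tendsto_nhds_spectralRadius c)
    (ENNReal.Tendsto.mul
      ((pow_nnnorm_pow_one_div_tendsto_nhds_spectralRadius a).ennrpow_const t)
      (.inr (by finiteness [spectralRadius_ne_top_s14 b]))
      ((pow_nnnorm_pow_one_div_tendsto_nhds_spectralRadius b).ennrpow_const (1 - t))
      (.inr (by finiteness [spectralRadius_ne_top_s14 a]))) hroot

theorem Matrix.spectrum_transpose_s14 {n R : Type*} [Fintype n] [DecidableEq n] [CommRing R]
    (A : Matrix n n R) : spectrum R Aᵀ = spectrum R A := by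
  ext k
  have h : algebraMap R (Matrix n n R) k - Aᵀ = (algebraMap R (Matrix n n R) k - A)ᵀ := by
    rw [Matrix.transpose_sub, Algebra.algebraMap_eq_smul_one, Matrix.transpose_smul,
      Matrix.transpose_one]
  simp only [spectrum.mem_iff, h, Matrix.isUnit_iff_isUnit_det, Matrix.det_transpose]

section SpectralRadius

variable {N : ℕ}

theorem specRad_nonneg (M : Matrix (Fin N) (Fin N) ℝ) : 0 ≤ specRad M :=
  ENNReal.toReal_nonneg

theorem specRad_transpose (M : Matrix (Fin N) (Fin N) ℝ) : specRad Mᵀ = specRad M := by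
  rw [specRad, specRad, Matrix.transpose_map, spectralRadius, spectralRadius,
    Matrix.spectrum_transpose_s14]

theorem specRad_le_rpow_mul_rpow {t : ℝ} (ht₀ : 0 ≤ t) (ht₁ : t ≤ 1)
    {A B C : Matrix (Fin N) (Fin N) ℝ} (hA : ∀ i j, 0 ≤ A i j) (hB : ∀ i j, 0 ≤ B i j)
    (hC₀ : ∀ i j, 0 ≤ C i j) (hC : ∀ i j, C i j ≤ A i j ^ t * B i j ^ (1 - t)) :
    specRad C ≤ specRad A ^ t * specRad B ^ (1 - t) := by
  have hnorm : ∀ k : ℕ, ‖C.map Complex.ofReal ^ k‖ ≤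
      ‖A.map Complex.ofReal ^ k‖ ^ t * ‖B.map Complex.ofReal ^ k‖ ^ (1 - t) := fun k => by
    have hpow : ∀ M : Matrix (Fin N) (Fin N) ℝ,
        M.map Complex.ofReal ^ k = (M ^ k).map Complex.ofReal :=
      fun M => (M.map_pow Complex.ofRealHom k).symm
    simp only [hpow, Matrix.linfty_opNorm_map_ofReal]
    refine Matrix.linfty_opNorm_le_rpow_mul_rpow ht₀ ht₁ (Matrix.pow_apply_nonneg hA k)
      (Matrix.pow_apply_nonneg hB k) fun i j => ?_
    rw [Real.norm_of_nonneg (Matrix.pow_apply_nonneg hC₀ k i j)]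
    exact Matrix.pow_apply_le_rpow_mul_rpow ht₀ ht₁ hA hB hC₀ hC k i j
  have := spectrum.spectralRadius_le_rpow_mul_rpow_of_norm_pow_le ht₀ ht₁ hnorm
  rw [specRad, specRad, specRad, ENNReal.toReal_rpow, ENNReal.toReal_rpow, ← ENNReal.toReal_mul]
  exact ENNReal.toReal_mono
    (by finiteness [spectrum.spectralRadius_ne_top_s14 (A.map Complex.ofReal),
      spectrum.spectralRadius_ne_top_s14 (B.map Complex.ofReal)]) this

end SpectralRadius

section WeightedGeometricSymmetrization

variable {N : ℕ} {K K₁ K₂ : Matrix (Fin N) (Fin N) ℝ}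

theorem wgs_apply_nonneg (hK : ∀ i j, 0 ≤ K i j) (α : ℝ) (i j : Fin N) : 0 ≤ wgs α K i j :=
  mul_nonneg (Real.rpow_nonneg (hK i j) _) (Real.rpow_nonneg (hK j i) _)

theorem wgs_apply_convex_comb (hK : ∀ i j, 0 ≤ K i j) {α β a b : ℝ} (hα₀ : 0 ≤ α) (hα₁ : α ≤ 1)
    (hβ₀ : 0 ≤ β) (hβ₁ : β ≤ 1) (ha : 0 ≤ a) (hb : 0 ≤ b) (hab : a + b = 1) (i j : Fin N) :
    wgs (a * α + b * β) K i j = wgs α K i j ^ a * wgs β K i j ^ b := by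
  have hx := hK i j
  have hy := hK j i
  simp only [wgs, Matrix.of_apply]
  rw [Real.mul_rpow (by positivity) (by positivity), Real.mul_rpow (by positivity) (by positivity),
    ← Real.rpow_mul hx, ← Real.rpow_mul hy, ← Real.rpow_mul hx, ← Real.rpow_mul hy,
    show 1 - (a * α + b * β) = a * (1 - α) + b * (1 - β) by linear_combination (-1 : ℝ) * hab,
    Real.rpow_add_of_nonneg hx (by positivity) (by positivity),
    Real.rpow_add_of_nonneg hy (mul_nonneg ha (by linarith)) (mul_nonneg hb (by linarith))]
  ring_nf

theorem wgs_one_sub (K : Matrix (Fin N) (Fin N) ℝ) (α : ℝ) : wgs (1 - α) K = (wgs α K)ᵀ := by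
  ext i j
  simp only [wgs, Matrix.of_apply, Matrix.transpose_apply, sub_sub_cancel]
  ring

theorem logConvexOn_specRad_wgs_mul_wgs (hK₁ : ∀ i j, 0 ≤ K₁ i j) (hK₂ : ∀ i j, 0 ≤ K₂ i j) :
    LogConvexOn (Icc 0 1) fun α => specRad (wgs α K₁ * wgs α K₂) := by
  refine ⟨convex_Icc 0 1, fun α _ => specRad_nonneg _, ?_⟩
  rintro α ⟨hα₀, hα₁⟩ β ⟨hβ₀, hβ₁⟩ a b ha hb hab
  have hnonneg : ∀ γ, ∀ i j, 0 ≤ (wgs γ K₁ * wgs γ K₂) i j := fun γ =>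
    Matrix.mul_apply_nonneg (wgs_apply_nonneg hK₁ γ) (wgs_apply_nonneg hK₂ γ)
  obtain rfl : b = 1 - a := by linarith
  refine specRad_le_rpow_mul_rpow ha (by linarith) (hnonneg α) (hnonneg β) (hnonneg _) fun i j => ?_
  refine Matrix.mul_apply_le_rpow_mul_rpow ha (by linarith) (wgs_apply_nonneg hK₁ α)
    (wgs_apply_nonneg hK₂ α) (wgs_apply_nonneg hK₁ β) (wgs_apply_nonneg hK₂ β)
    (wgs_apply_nonneg hK₂ _) (fun i j => ?_) (fun i j => ?_) i j
  exacts [(wgs_apply_convex_comb hK₁ hα₀ hα₁ hβ₀ hβ₁ ha hb hab i j).le,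
    (wgs_apply_convex_comb hK₂ hα₀ hα₁ hβ₀ hβ₁ ha hb hab i j).le]

end WeightedGeometricSymmetrization

theorem rho2_one_sub {N : ℕ} (K₁ K₂ : Matrix (Fin N) (Fin N) ℝ) (α : ℝ) :
    rho2 K₁ K₂ (1 - α) = rho2 K₁ K₂ α := by
  rw [rho2, rho2, wgs_one_sub, wgs_one_sub, ← Matrix.transpose_mul, ← Matrix.transpose_mul,
    specRad_transpose, specRad_transpose, mul_comm]

theorem quasiconvexOn_rho2 {N : ℕ} {K₁ K₂ : Matrix (Fin N) (Fin N) ℝ}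
    (hK₁ : ∀ i j, 0 ≤ K₁ i j) (hK₂ : ∀ i j, 0 ≤ K₂ i j) :
    QuasiconvexOn ℝ (Icc 0 1) (rho2 K₁ K₂) :=
  ((logConvexOn_specRad_wgs_mul_wgs hK₁ hK₂).mul
    (logConvexOn_specRad_wgs_mul_wgs hK₂ hK₁)).quasiconvexOn.monotone_comp Real.sqrt_monotone

/-- `ρ₂` is decreasing on `[0, 1/2]`, increasing on `[1/2, 1]`, and in
particular `ρ₂(α) ≥ ρ₂(1/2)` for all `α ∈ [0,1]`. -/
theorem rho2_monotonicity {N : ℕ} (K₁ K₂ : Matrix (Fin N) (Fin N) ℝ)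
    (hK₁ : ∀ i j, 0 ≤ K₁ i j) (hK₂ : ∀ i j, 0 ≤ K₂ i j) :
    (∀ a b : ℝ, 0 ≤ a → a ≤ b → b ≤ 1 / 2 → rho2 K₁ K₂ b ≤ rho2 K₁ K₂ a) ∧
    (∀ a b : ℝ, 1 / 2 ≤ a → a ≤ b → b ≤ 1 → rho2 K₁ K₂ a ≤ rho2 K₁ K₂ b) ∧
    (∀ α : ℝ, 0 ≤ α → α ≤ 1 → rho2 K₁ K₂ (1 / 2) ≤ rho2 K₁ K₂ α) := by
  have hanti := (quasiconvexOn_rho2 hK₁ hK₂).antitoneOn_Icc_zero_half (rho2_one_sub K₁ K₂)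
  have hmono := (quasiconvexOn_rho2 hK₁ hK₂).monotoneOn_Icc_half_one (rho2_one_sub K₁ K₂)
  have hhalf : (1 / 2 : ℝ) ∈ Icc 0 (1 / 2) ∩ Icc (1 / 2) 1 := by norm_num
  refine ⟨fun a b ha hab hb => hanti ⟨ha, hab.trans hb⟩ ⟨ha.trans hab, hb⟩ hab,
    fun a b ha hab hb => hmono ⟨ha, hab.trans hb⟩ ⟨ha.trans hab, hb⟩ hab, fun α hα₀ hα₁ => ?_⟩
  rcases le_total α (1 / 2) with hα | hα
  · exact hanti ⟨hα₀, hα⟩ hhalf.1 hα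
  · exact hmono hhalf.2 ⟨hα, hα₁⟩ hα
end
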